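/- arXiv:1905.12587 — 5 statements merged into one kernel-verified Lean document; each statement's English description precedes it below -/
import Mathlib

section
/- Let n ≥ 1, and let l, r̃ ∈ ℝ and σ ∈ ℝ. On (0,∞)×ℝ×ℝ^{n−1} with coordinates (x, τ_b, μ_b), consider the symbols p(x,τ_b,μ_b) = x²(τ_b² + |μ_b|²) − 2σxτ_b and a(x,τ_b,μ_b) = x^{−2l−1}(τ_b² + |μ_b|²)^{r̃−1/2}, the latter defined for (τ_b,μ_b) ≠ 0. Then the b-Poisson bracket satisfies, at every point with (τ_b,μ_b) ≠ 0: {p, a} = x^{−2l}(τ_b² + |μ_b|²)^{r̃−3/2}·( 4σ((l+r̃)τ_b² + (l+1/2)|μ_b|²) − 4x(l+r̃)τ_b(τ_b² + |μ_b|²) ). -/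
/-!
The symbol `a` is a product `x^α q^β` with `q = τ² + |μ|²`, so each of the four partial
derivatives entering the bracket is explicit; writing every power of `x` and `q` in terms of
`x^{−2l}` and `q^{r̃−3/2}` (legitimate because `x > 0` and `q > 0` off the zero section)
turns the bracket into a polynomial identity.
-/

/-- The b-Poisson bracket on the b-phase space `(x, τ_b, μ_b) ∈ (0,∞) × ℝ × ℝ^{n-1}`, for
symbols independent of the boundary variables `y`:
`{f, g} = (∂_{τ_b} f)(x ∂ₓ g) − (x ∂ₓ f)(∂_{τ_b} g)`. -/
noncomputable def bBracket {m : ℕ} (f g : ℝ → ℝ → EuclideanSpace ℝ (Fin m) → ℝ)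
    (x τ : ℝ) (μ : EuclideanSpace ℝ (Fin m)) : ℝ :=
  deriv (fun t => f x t μ) τ * (x * deriv (fun s => g s τ μ) x)
    - (x * deriv (fun s => f s τ μ) x) * deriv (fun t => g x t μ) τ

theorem bBracket_eq_of_hasDerivAt {m : ℕ} {f g : ℝ → ℝ → EuclideanSpace ℝ (Fin m) → ℝ}
    {x τ : ℝ} {μ : EuclideanSpace ℝ (Fin m)} {fτ fx gτ gx : ℝ}
    (hfτ : HasDerivAt (fun t => f x t μ) fτ τ) (hfx : HasDerivAt (fun s => f s τ μ) fx x)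
    (hgτ : HasDerivAt (fun t => g x t μ) gτ τ) (hgx : HasDerivAt (fun s => g s τ μ) gx x) :
    bBracket f g x τ μ = fτ * (x * gx) - (x * fx) * gτ := by
  rw [bBracket, hfτ.deriv, hfx.deriv, hgτ.deriv, hgx.deriv]

theorem sq_add_norm_sq_pos {E : Type*} [NormedAddCommGroup E] {τ : ℝ} {μ : E}
    (h : (τ, μ) ≠ 0) : 0 < τ ^ 2 + ‖μ‖ ^ 2 := by
  refine (add_nonneg (sq_nonneg τ) (sq_nonneg ‖μ‖)).lt_of_ne fun h0 => h ?_
  obtain ⟨hτ, hμ⟩ := (add_eq_zero_iff_of_nonneg (sq_nonneg τ) (sq_nonneg ‖μ‖)).mp h0.symm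
  exact Prod.ext (pow_eq_zero_iff two_ne_zero |>.mp hτ)
    (norm_eq_zero.mp (pow_eq_zero_iff two_ne_zero |>.mp hμ))

theorem hasDerivAt_sq_add_const {c τ : ℝ} : HasDerivAt (fun t : ℝ => t ^ 2 + c) (2 * τ) τ := by
  simpa using (hasDerivAt_pow 2 τ).add_const c

theorem hasDerivAt_sq_add_const_rpow {c s τ : ℝ} (hq : 0 < τ ^ 2 + c) :
    HasDerivAt (fun t : ℝ => (t ^ 2 + c) ^ s) (2 * τ * s * (τ ^ 2 + c) ^ (s - 1)) τ :=
  hasDerivAt_sq_add_const.rpow_const (Or.inl hq.ne')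

theorem hasDerivAt_mul_sq_add_const_sub_mul {a b c τ : ℝ} :
    HasDerivAt (fun t : ℝ => a * (t ^ 2 + c) - b * t) (2 * a * τ - b) τ := by
  have h := ((hasDerivAt_sq_add_const (c := c) (τ := τ)).const_mul a).sub
    ((hasDerivAt_id' τ).const_mul b)
  rwa [show a * (2 * τ) - b * 1 = 2 * a * τ - b by ring] at h

theorem commutator_symbol_real_general (n : ℕ) (l r σ : ℝ)
    (x τb : ℝ) (hx : 0 < x) (μb : EuclideanSpace ℝ (Fin (n - 1)))
    (hne : (τb, μb) ≠ 0) :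
    bBracket
        (fun x τ μ => x ^ 2 * (τ ^ 2 + ‖μ‖ ^ 2) - 2 * σ * x * τ)
        (fun x τ μ => x ^ (-2 * l - 1) * (τ ^ 2 + ‖μ‖ ^ 2) ^ (r - 1 / 2))
        x τb μb
      = x ^ (-2 * l) * (τb ^ 2 + ‖μb‖ ^ 2) ^ (r - 3 / 2) *
          (4 * σ * ((l + r) * τb ^ 2 + (l + 1 / 2) * ‖μb‖ ^ 2)
            - 4 * x * (l + r) * τb * (τb ^ 2 + ‖μb‖ ^ 2)) := by
  set q := τb ^ 2 + ‖μb‖ ^ 2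
  have hq : 0 < q := sq_add_norm_sq_pos hne
  have hpx : HasDerivAt (fun s : ℝ => s ^ 2 * q - 2 * σ * s * τb) (2 * x * q - 2 * σ * τb) x := by
    convert hasDerivAt_mul_sq_add_const_sub_mul (a := q) (b := 2 * σ * τb) (c := 0) using 1
    · ext s; ring
    · ring
  rw [bBracket_eq_of_hasDerivAt hasDerivAt_mul_sq_add_const_sub_mul hpx
    ((hasDerivAt_sq_add_const_rpow hq).const_mul _)
    ((Real.hasDerivAt_rpow_const (Or.inl hx.ne')).mul_const _)]
  have hx_pow : x ^ (-2 * l - 1) = x ^ (-2 * l) / x := by rw [Real.rpow_sub hx, Real.rpow_one]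
  have hx_pow' : x ^ (-2 * l - 1 - 1) = x ^ (-2 * l) / x / x := by
    rw [Real.rpow_sub hx, hx_pow, Real.rpow_one]
  have hq_pow : q ^ (r - 1 / 2) = q ^ (r - 3 / 2) * q := by
    rw [← Real.rpow_add_one hq.ne']; ring_nf
  have hq_pow' : q ^ (r - 1 / 2 - 1) = q ^ (r - 3 / 2) := by ring_nf
  rw [hx_pow', hx_pow, hq_pow, hq_pow']
  field_simp
  ring

/-- Lemma 4.2 of the paper (the main commutator computation): with
`p = x²(τ_b² + |μ_b|²) − 2σxτ_b` and `a = x^{−2l−1}(τ_b² + |μ_b|²)^{r̃−1/2}`, at every point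
with `(τ_b, μ_b) ≠ 0`,
`{p, a} = x^{−2l}(τ_b²+|μ_b|²)^{r̃−3/2}(4σ((l+r̃)τ_b² + (l+1/2)|μ_b|²)
           − 4x(l+r̃)τ_b(τ_b²+|μ_b|²))`. -/
theorem commutator_symbol_real (n : ℕ) (hn : 1 ≤ n) (l r σ : ℝ)
    (x τb : ℝ) (hx : 0 < x) (μb : EuclideanSpace ℝ (Fin (n - 1)))
    (hne : (τb, μb) ≠ 0) :
    bBracket
        (fun x τ μ => x ^ 2 * (τ ^ 2 + ‖μ‖ ^ 2) - 2 * σ * x * τ)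
        (fun x τ μ => x ^ (-2 * l - 1) * (τ ^ 2 + ‖μ‖ ^ 2) ^ (r - 1 / 2))
        x τb μb
      = x ^ (-2 * l) * (τb ^ 2 + ‖μb‖ ^ 2) ^ (r - 3 / 2) *
          (4 * σ * ((l + r) * τb ^ 2 + (l + 1 / 2) * ‖μb‖ ^ 2)
            - 4 * x * (l + r) * τb * (τb ^ 2 + ‖μb‖ ^ 2)) :=
  commutator_symbol_real_general n l r σ x τb hx μb hne
end

section
/- Let n ≥ 1, σ > 0 a real number, and l, r̃ ∈ ℝ with l + 1/2 > 0. Then there exist c > 0 and δ > 0 such that for all τ ∈ ℝ and μ ∈ ℝ^{n−1} satisfying τ² + |μ|² = 2στ and 0 < τ² + |μ|² < δ, one has 4σ( (l+r̃)τ² + (l+1/2)|μ|² ) − 4(l+r̃)τ(τ²+|μ|²) ≥ c·(τ²+|μ|²). If instead l + 1/2 < 0, there exist c, δ > 0 such that under the same constraints the left-hand side is ≤ −c·(τ²+|μ|²). -/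
/-!
On the characteristic set `τ² + |μ|² = 2στ` the quantity `ρ = τ² + |μ|²` determines `τ = ρ / (2σ)`
and `|μ|² = ρ - τ²`, and the symbol collapses to `ρ (4σ(l + 1/2) - (2l + r + 1/2) ρ / σ)`. Near the
zero section the quadratic term is dominated by the linear one, whose sign is that of `l + 1/2`.
-/

lemma symbol_eq_of_char_set {σ : ℝ} (hσ : σ ≠ 0) (a s τ m : ℝ) (hchar : τ ^ 2 + m = 2 * σ * τ) :
    4 * σ * (a * τ ^ 2 + s * m) - 4 * a * τ * (τ ^ 2 + m)
      = (τ ^ 2 + m) * (4 * σ * s - (a + s) / σ * (τ ^ 2 + m)) := by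
  obtain rfl : m = 2 * σ * τ - τ ^ 2 := by linarith
  field_simp
  ring

lemma exists_pos_forall_abs_mul_lt (b : ℝ) {ε : ℝ} (hε : 0 < ε) :
    ∃ δ > 0, ∀ ρ : ℝ, |ρ| < δ → |b * ρ| < ε := by
  refine ⟨ε / (|b| + 1), by positivity, fun ρ hρ => ?_⟩
  rw [lt_div_iff₀ (by positivity)] at hρ
  rw [abs_mul]
  nlinarith [abs_nonneg b, abs_nonneg ρ]

theorem commutator_elliptic_on_char_set_general (n : ℕ) (σ : ℝ) (hσ : 0 < σ)
    (l r : ℝ) :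
    (l + 1 / 2 > 0 →
      ∃ c > (0 : ℝ), ∃ δ > (0 : ℝ), ∀ (τ : ℝ) (μ : EuclideanSpace ℝ (Fin (n - 1))),
        τ ^ 2 + ‖μ‖ ^ 2 = 2 * σ * τ →
        0 < τ ^ 2 + ‖μ‖ ^ 2 → τ ^ 2 + ‖μ‖ ^ 2 < δ →
        4 * σ * ((l + r) * τ ^ 2 + (l + 1 / 2) * ‖μ‖ ^ 2)
            - 4 * (l + r) * τ * (τ ^ 2 + ‖μ‖ ^ 2)
          ≥ c * (τ ^ 2 + ‖μ‖ ^ 2)) ∧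
    (l + 1 / 2 < 0 →
      ∃ c > (0 : ℝ), ∃ δ > (0 : ℝ), ∀ (τ : ℝ) (μ : EuclideanSpace ℝ (Fin (n - 1))),
        τ ^ 2 + ‖μ‖ ^ 2 = 2 * σ * τ →
        0 < τ ^ 2 + ‖μ‖ ^ 2 → τ ^ 2 + ‖μ‖ ^ 2 < δ →
        4 * σ * ((l + r) * τ ^ 2 + (l + 1 / 2) * ‖μ‖ ^ 2)
            - 4 * (l + r) * τ * (τ ^ 2 + ‖μ‖ ^ 2)
          ≤ -c * (τ ^ 2 + ‖μ‖ ^ 2)) := by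
  set s := l + 1 / 2
  set b := (l + r + s) / σ
  constructor
  · intro hs
    obtain ⟨δ, hδ, hsmall⟩ := exists_pos_forall_abs_mul_lt b (by positivity : 0 < 2 * σ * s)
    refine ⟨2 * σ * s, by positivity, δ, hδ, fun τ μ hchar hpos hlt => ?_⟩
    rw [symbol_eq_of_char_set hσ.ne' _ _ _ _ hchar]
    have hbρ := abs_lt.mp (hsmall _ (by rwa [abs_of_pos hpos]))
    nlinarith
  · intro hs
    obtain ⟨δ, hδ, hsmall⟩ :=
      exists_pos_forall_abs_mul_lt b (by nlinarith : 0 < 2 * σ * -s)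
    refine ⟨2 * σ * -s, by nlinarith, δ, hδ, fun τ μ hchar hpos hlt => ?_⟩
    rw [symbol_eq_of_char_set hσ.ne' _ _ _ _ hchar]
    have hbρ := abs_lt.mp (hsmall _ (by rwa [abs_of_pos hpos]))
    nlinarith

/-- Corollary 4.3 of the paper (ellipticity of the commutator symbol on the characteristic
set near the scattering zero section): for real `σ > 0`, in the rescaled fiber variables
`(τ, μ)` with `τ² + |μ|² = 2στ`, the factor
`4σ((l+r̃)τ² + (l+1/2)|μ|²) − 4(l+r̃)τ(τ²+|μ|²)` is bounded below by `c(τ²+|μ|²)` near the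
zero section if `l + 1/2 > 0`, and bounded above by `−c(τ²+|μ|²)` if `l + 1/2 < 0`. -/
theorem commutator_elliptic_on_char_set (n : ℕ) (hn : 1 ≤ n) (σ : ℝ) (hσ : 0 < σ)
    (l r : ℝ) :
    (l + 1 / 2 > 0 →
      ∃ c > (0 : ℝ), ∃ δ > (0 : ℝ), ∀ (τ : ℝ) (μ : EuclideanSpace ℝ (Fin (n - 1))),
        τ ^ 2 + ‖μ‖ ^ 2 = 2 * σ * τ →
        0 < τ ^ 2 + ‖μ‖ ^ 2 → τ ^ 2 + ‖μ‖ ^ 2 < δ →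
        4 * σ * ((l + r) * τ ^ 2 + (l + 1 / 2) * ‖μ‖ ^ 2)
            - 4 * (l + r) * τ * (τ ^ 2 + ‖μ‖ ^ 2)
          ≥ c * (τ ^ 2 + ‖μ‖ ^ 2)) ∧
    (l + 1 / 2 < 0 →
      ∃ c > (0 : ℝ), ∃ δ > (0 : ℝ), ∀ (τ : ℝ) (μ : EuclideanSpace ℝ (Fin (n - 1))),
        τ ^ 2 + ‖μ‖ ^ 2 = 2 * σ * τ →
        0 < τ ^ 2 + ‖μ‖ ^ 2 → τ ^ 2 + ‖μ‖ ^ 2 < δ →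
        4 * σ * ((l + r) * τ ^ 2 + (l + 1 / 2) * ‖μ‖ ^ 2)
            - 4 * (l + r) * τ * (τ ^ 2 + ‖μ‖ ^ 2)
          ≤ -c * (τ ^ 2 + ‖μ‖ ^ 2)) :=
  commutator_elliptic_on_char_set_general n σ hσ l r
end

section
/- Let n ≥ 1, l, r̃ ∈ ℝ and σ ∈ ℝ. With p(x,τ_b,μ_b) = x²(τ_b²+|μ_b|²) − 2σxτ_b, a(x,τ_b,μ_b) = x^{−2l−1}(τ_b²+|μ_b|²)^{r̃−1/2}, and s̃(x,τ_b,μ_b) = (r̃−1/2)·τ_b·(τ_b²+|μ_b|²)^{−1}, one has at every point with (τ_b,μ_b) ≠ 0: {p, a} + 2·s̃·a·p = x^{−2(l+r̃)+1}·(x²τ_b² + x²|μ_b|²)^{r̃−1/2}·( 4σ(l+1/2) − 2(2l+r̃+1/2)·xτ_b ). Moreover, if σ > 0 and l+1/2 > 0 there exist c, δ > 0 such that 4σ(l+1/2) − 2(2l+r̃+1/2)·xτ_b ≥ c whenever x·|τ_b| < δ, and if σ > 0 and l+1/2 < 0 there exist c, δ > 0 such that this factor is ≤ −c whenever x·|τ_b|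 < δ. -/
lemma key_alg (x q σ τ l r : ℝ) (hx : 0 < x) (hq : 0 < q) :
    (2 * x ^ 2 * τ - 2 * σ * x) * (x * ((-2 * l - 1) * x ^ (-2 * l - 1 - 1) * q ^ (r - 1 / 2)))
      - (x * (2 * x * q - 2 * σ * τ)) *
          (x ^ (-2 * l - 1) * ((r - 1 / 2) * q ^ (r - 1 / 2 - 1) * (2 * τ)))
      + 2 * ((r - 1 / 2) * τ * q⁻¹) * (x ^ (-2 * l - 1) * q ^ (r - 1 / 2)) *
          (x ^ 2 * q - 2 * σ * x * τ)
    = x ^ (-2 * (l + r) + 1) * (x ^ 2 * q) ^ (r - 1 / 2) *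
        (4 * σ * (l + 1 / 2) - 2 * (2 * l + r + 1 / 2) * (x * τ)) := by
  have hx2 : ((x:ℝ) ^ 2 * q) ^ (r - 1 / 2) = x ^ (2 * (r - 1 / 2)) * q ^ (r - 1 / 2) := by
    rw [Real.mul_rpow (by positivity) hq.le, ← Real.rpow_natCast x 2, ← Real.rpow_mul hx.le]
    norm_num
  have hx3 : x ^ (-2 * (l + r) + 1) * x ^ (2 * (r - 1 / 2)) = x ^ (-2 * l : ℝ) := by
    rw [← Real.rpow_add hx]; ring_nf
  rw [hx2, ← mul_assoc (x ^ (-2 * (l + r) + 1)) (x ^ (2 * (r - 1 / 2))) (q ^ (r - 1 / 2)), hx3]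
  rw [show (-2 * l - 1 - 1 : ℝ) = (-2 * l - 1) - 1 by ring]
  rw [Real.rpow_sub hx (-2 * l - 1) 1, Real.rpow_sub hx (-2 * l) 1,
    Real.rpow_sub hq (r - 1 / 2) 1, Real.rpow_one, Real.rpow_one]
  field_simp
  ring

lemma factor_bound (K c x τb : ℝ) (hc : 0 < c) (hx : 0 < x)
    (hδ : x * |τb| < c / (2 * (|K| + 1))) : |2 * K * (x * τb)| < c := by
  have h1 : |2 * K * (x * τb)| = 2 * |K| * (x * |τb|) := by
    rw [abs_mul, abs_mul, abs_mul, abs_of_pos hx]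
    norm_num
  have hxt : 0 ≤ x * |τb| := by positivity
  have h2 : 2 * (|K| + 1) * (x * |τb|) < 2 * (|K| + 1) * (c / (2 * (|K| + 1))) := by
    apply mul_lt_mul_of_pos_left hδ
    have := abs_nonneg K; linarith
  have h3 : 2 * (|K| + 1) * (c / (2 * (|K| + 1))) = c := by
    field_simp
  nlinarith [abs_nonneg K]


/-- Lemma 4.4 of the paper: with `p = x²(τ_b²+|μ_b|²) − 2σxτ_b`,
`a = x^{−2l−1}(τ_b²+|μ_b|²)^{r̃−1/2}` and `s̃ = (r̃−1/2)τ_b(τ_b²+|μ_b|²)^{−1}`,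
`{p,a} + 2 s̃ a p = x^{−2(l+r̃)+1}(x²τ_b²+x²|μ_b|²)^{r̃−1/2}(4σ(l+1/2) − 2(2l+r̃+1/2)xτ_b)`,
and the last factor is bounded below by some `c > 0` where `x|τ_b|` is small when `σ > 0`,
`l+1/2 > 0`, and bounded above by `−c` when `σ > 0`, `l+1/2 < 0`. -/
theorem modified_commutator_symbol (n : ℕ) (hn : 1 ≤ n) (l r σ : ℝ) :
    (∀ (x τb : ℝ), 0 < x → ∀ μb : EuclideanSpace ℝ (Fin (n - 1)), (τb, μb) ≠ 0 →
      bBracket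
          (fun x τ μ => x ^ 2 * (τ ^ 2 + ‖μ‖ ^ 2) - 2 * σ * x * τ)
          (fun x τ μ => x ^ (-2 * l - 1) * (τ ^ 2 + ‖μ‖ ^ 2) ^ (r - 1 / 2))
          x τb μb
        + 2 * ((r - 1 / 2) * τb * (τb ^ 2 + ‖μb‖ ^ 2)⁻¹) *
            (x ^ (-2 * l - 1) * (τb ^ 2 + ‖μb‖ ^ 2) ^ (r - 1 / 2)) *
            (x ^ 2 * (τb ^ 2 + ‖μb‖ ^ 2) - 2 * σ * x * τb)
      = x ^ (-2 * (l + r) + 1) * (x ^ 2 * τb ^ 2 + x ^ 2 * ‖μb‖ ^ 2) ^ (r - 1 / 2) *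
          (4 * σ * (l + 1 / 2) - 2 * (2 * l + r + 1 / 2) * (x * τb))) ∧
    (0 < σ → 0 < l + 1 / 2 →
      ∃ c > (0 : ℝ), ∃ δ > (0 : ℝ), ∀ x τb : ℝ, 0 < x → x * |τb| < δ →
        4 * σ * (l + 1 / 2) - 2 * (2 * l + r + 1 / 2) * (x * τb) ≥ c) ∧
    (0 < σ → l + 1 / 2 < 0 →
      ∃ c > (0 : ℝ), ∃ δ > (0 : ℝ), ∀ x τb : ℝ, 0 < x → x * |τb| < δ →
        4 * σ * (l + 1 / 2) - 2 * (2 * l + r + 1 / 2) * (x * τb) ≤ -c) := by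
  refine ⟨?_, ?_, ?_⟩
  · intro x τb hx μb hne
    set c : ℝ := ‖μb‖ ^ 2 with hc
    have hq : 0 < τb ^ 2 + c := by
      rcases (not_and_or.mp (by simpa [Prod.ext_iff] using hne)) with h | h
      · have h1 : 0 < τb ^ 2 := by positivity
        have h2 : 0 ≤ c := by positivity
        linarith
      · have h1 : 0 < ‖μb‖ := norm_pos_iff.mpr h
        have h2 : 0 < c := by positivity
        have h3 : 0 ≤ τb ^ 2 := sq_nonneg τb
        linarith
    have d1 : deriv (fun t : ℝ => x ^ 2 * (t ^ 2 + c) - 2 * σ * x * t) τb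
        = 2 * x ^ 2 * τb - 2 * σ * x := by
      have h := (((hasDerivAt_pow 2 τb).add_const c).const_mul (x ^ 2)).sub
        ((hasDerivAt_id' τb).const_mul (2 * σ * x))
      rw [(show HasDerivAt (fun t : ℝ => x ^ 2 * (t ^ 2 + c) - 2 * σ * x * t) _ τb from h).deriv]; push_cast; ring
    have d2 : deriv (fun s : ℝ => s ^ 2 * (τb ^ 2 + c) - 2 * σ * s * τb) x
        = 2 * x * (τb ^ 2 + c) - 2 * σ * τb := by
      have h := ((hasDerivAt_pow 2 x).mul_const (τb ^ 2 + c)).sub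
        (((hasDerivAt_id' x).const_mul (2 * σ)).mul_const τb)
      rw [(show HasDerivAt (fun s : ℝ => s ^ 2 * (τb ^ 2 + c) - 2 * σ * s * τb) _ x from h).deriv]; push_cast; ring
    have d3 : deriv (fun t : ℝ => x ^ (-2 * l - 1) * (t ^ 2 + c) ^ (r - 1 / 2)) τb
        = x ^ (-2 * l - 1) * ((r - 1 / 2) * (τb ^ 2 + c) ^ (r - 1 / 2 - 1) * (2 * τb)) := by
      have h := ((((hasDerivAt_pow 2 τb).add_const c).rpow_const (p := r - 1 / 2)
        (Or.inl hq.ne')).const_mul (x ^ (-2 * l - 1)))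
      rw [h.deriv]; push_cast; ring
    have d4 : deriv (fun s : ℝ => s ^ (-2 * l - 1) * (τb ^ 2 + c) ^ (r - 1 / 2)) x
        = (-2 * l - 1) * x ^ (-2 * l - 1 - 1) * (τb ^ 2 + c) ^ (r - 1 / 2) := by
      have h := (Real.hasDerivAt_rpow_const (p := -2 * l - 1) (Or.inl hx.ne')).mul_const
        ((τb ^ 2 + c) ^ (r - 1 / 2))
      rw [h.deriv]
    simp only [bBracket]
    rw [d1, d2, d3, d4]
    rw [show x ^ 2 * τb ^ 2 + x ^ 2 * c = x ^ 2 * (τb ^ 2 + c) by ring]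
    have := key_alg x (τb ^ 2 + c) σ τb l r hx hq
    linarith [this]
  · intro hσ hl
    refine ⟨2 * σ * (l + 1 / 2), by positivity,
      2 * σ * (l + 1 / 2) / (2 * (|2 * l + r + 1 / 2| + 1)), by positivity, ?_⟩
    intro x τb hx hδ
    have h := factor_bound (2 * l + r + 1 / 2) (2 * σ * (l + 1 / 2)) x τb (by positivity) hx hδ
    have h2 := le_abs_self (2 * (2 * l + r + 1 / 2) * (x * τb))
    have h3 : |2 * (2 * l + r + 1 / 2) * (x * τb)| = |2 * (2 * l + r + 1 / 2) * (x * τb)| := rfl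
    have h4 : (2 * (2 * l + r + 1 / 2) * (x * τb)) = 2 * (2 * l + r + 1 / 2) * (x * τb) := rfl
    have h5 : |2 * (2 * l + r + 1 / 2) * (x * τb)| < 2 * σ * (l + 1 / 2) := h
    linarith [le_abs_self (2 * (2 * l + r + 1 / 2) * (x * τb))]
  · intro hσ hl
    have hc : (0:ℝ) < 2 * σ * (-(l + 1 / 2)) := by
      have : 0 < -(l + 1 / 2) := by linarith
      positivity
    refine ⟨2 * σ * (-(l + 1 / 2)), hc,
      2 * σ * (-(l + 1 / 2)) / (2 * (|2 * l + r + 1 / 2| + 1)), by positivity, ?_⟩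
    intro x τb hx hδ
    have h := factor_bound (2 * l + r + 1 / 2) (2 * σ * (-(l + 1 / 2))) x τb hc hx hδ
    linarith [neg_abs_le (2 * (2 * l + r + 1 / 2) * (x * τb))]
end

section
/- Let n ≥ 1, l, r̃ ∈ ℝ and σ ∈ ℂ∖{0}. With p̃(x,τ_b,μ_b) = (Re σ/|σ|²)·x²(τ_b²+|μ_b|²) − 2xτ_b and a(x,τ_b,μ_b) = x^{−2l−1}(τ_b²+|μ_b|²)^{r̃−1/2}, one has at every point with (τ_b,μ_b) ≠ 0: {p̃, a} = x^{−2l}(τ_b²+|μ_b|²)^{r̃−3/2}·( 4((l+r̃)τ_b² + (l+1/2)|μ_b|²) − 4·(Re σ/|σ|²)·x(l+r̃)τ_b(τ_b²+|μ_b|²) ). -/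
/-- Lemma 4.10 of the paper (commutator computation for the rescaled conjugated operator
`P̃(σ) = σ⁻¹ P̂(σ)` with complex `σ ≠ 0`): with
`p̃ = (Re σ/|σ|²)x²(τ_b²+|μ_b|²) − 2xτ_b` and `a = x^{−2l−1}(τ_b²+|μ_b|²)^{r̃−1/2}`,
`{p̃, a} = x^{−2l}(τ_b²+|μ_b|²)^{r̃−3/2}(4((l+r̃)τ_b² + (l+1/2)|μ_b|²)
            − 4(Re σ/|σ|²)x(l+r̃)τ_b(τ_b²+|μ_b|²))`. -/
theorem commutator_symbol_complex (n : ℕ) (hn : 1 ≤ n) (l r : ℝ) (σ : ℂ) (hσ : σ ≠ 0)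
    (x τb : ℝ) (hx : 0 < x) (μb : EuclideanSpace ℝ (Fin (n - 1)))
    (hne : (τb, μb) ≠ 0) :
    bBracket
        (fun x τ μ => σ.re / ‖σ‖ ^ 2 * (x ^ 2 * (τ ^ 2 + ‖μ‖ ^ 2)) - 2 * x * τ)
        (fun x τ μ => x ^ (-2 * l - 1) * (τ ^ 2 + ‖μ‖ ^ 2) ^ (r - 1 / 2))
        x τb μb
      = x ^ (-2 * l) * (τb ^ 2 + ‖μb‖ ^ 2) ^ (r - 3 / 2) *
          (4 * ((l + r) * τb ^ 2 + (l + 1 / 2) * ‖μb‖ ^ 2)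
            - 4 * (σ.re / ‖σ‖ ^ 2) * x * (l + r) * τb * (τb ^ 2 + ‖μb‖ ^ 2)) := by
  set c : ℝ := σ.re / ‖σ‖ ^ 2 with hc
  have hne' : τb ≠ 0 ∨ μb ≠ 0 := by
    by_contra h
    push_neg at h
    exact hne (by simp [Prod.ext_iff, h.1, h.2])
  have hq : 0 < τb ^ 2 + ‖μb‖ ^ 2 := by
    rcases hne' with h | h
    · have : 0 < τb ^ 2 := by positivity
      nlinarith [sq_nonneg ‖μb‖]
    · have : 0 < ‖μb‖ ^ 2 := by
        have : 0 < ‖μb‖ := norm_pos_iff.mpr h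
        positivity
      nlinarith [sq_nonneg τb]
  set q : ℝ := τb ^ 2 + ‖μb‖ ^ 2 with hqdef
  -- derivative of p̃ in τ
  have hfτ : deriv (fun t : ℝ => c * (x ^ 2 * (t ^ 2 + ‖μb‖ ^ 2)) - 2 * x * t) τb
      = c * (x ^ 2 * (2 * τb)) - 2 * x := by
    have h1 : HasDerivAt (fun t : ℝ => c * (x ^ 2 * (t ^ 2 + ‖μb‖ ^ 2)) - 2 * x * t)
        (c * (x ^ 2 * (2 * τb)) - 2 * x) τb := by
      have ht : HasDerivAt (fun t : ℝ => t ^ 2 + ‖μb‖ ^ 2) (2 * τb) τb := by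
        simpa using (hasDerivAt_pow 2 τb).add_const (‖μb‖ ^ 2)
      have := ((ht.const_mul (x ^ 2)).const_mul c).sub
        ((hasDerivAt_id τb).const_mul (2 * x))
      simpa [Pi.sub_def, mul_comm, mul_assoc, mul_left_comm] using this
    exact h1.deriv
  -- derivative of p̃ in x
  have hfx : deriv (fun s : ℝ => c * (s ^ 2 * q) - 2 * s * τb) x
      = c * (2 * x * q) - 2 * τb := by
    have h1 : HasDerivAt (fun s : ℝ => c * (s ^ 2 * q) - 2 * s * τb)
        (c * (2 * x * q) - 2 * τb) x := by
      have hs : HasDerivAt (fun s : ℝ => s ^ 2 * q) (2 * x * q) x := by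
        simpa using (hasDerivAt_pow 2 x).mul_const q
      have := (hs.const_mul c).sub (((hasDerivAt_id x).const_mul 2).mul_const τb)
      simpa [Pi.sub_def, mul_comm, mul_assoc, mul_left_comm] using this
    exact h1.deriv
  -- derivative of a in x
  have hgx : deriv (fun s : ℝ => s ^ (-2 * l - 1) * q ^ (r - 1 / 2)) x
      = (-2 * l - 1) * x ^ (-2 * l - 1 - 1) * q ^ (r - 1 / 2) := by
    have h1 : HasDerivAt (fun s : ℝ => s ^ (-2 * l - 1) * q ^ (r - 1 / 2))
        ((-2 * l - 1) * x ^ (-2 * l - 1 - 1) * q ^ (r - 1 / 2)) x :=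
      (Real.hasDerivAt_rpow_const (p := -2 * l - 1) (Or.inl hx.ne')).mul_const _
    exact h1.deriv
  -- derivative of a in τ
  have hgτ : deriv (fun t : ℝ => x ^ (-2 * l - 1) * (t ^ 2 + ‖μb‖ ^ 2) ^ (r - 1 / 2)) τb
      = x ^ (-2 * l - 1) * (2 * τb * (r - 1 / 2) * q ^ (r - 1 / 2 - 1)) := by
    have ht : HasDerivAt (fun t : ℝ => t ^ 2 + ‖μb‖ ^ 2) (2 * τb) τb := by
      simpa using (hasDerivAt_pow 2 τb).add_const (‖μb‖ ^ 2)
    have h1 : HasDerivAt (fun t : ℝ => (t ^ 2 + ‖μb‖ ^ 2) ^ (r - 1 / 2))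
        (2 * τb * (r - 1 / 2) * q ^ (r - 1 / 2 - 1)) τb :=
      ht.rpow_const (Or.inl hq.ne')
    exact (h1.const_mul _).deriv
  rw [bBracket, hfτ, hfx, hgx, hgτ]
  -- rewrite the rpow exponents
  have e1 : x ^ (-2 * l - 1) = x ^ (-2 * l) / x := by
    rw [Real.rpow_sub hx, Real.rpow_one]
  have e2 : x ^ (-2 * l - 1 - 1) = x ^ (-2 * l) / x / x := by
    rw [Real.rpow_sub hx, Real.rpow_sub hx, Real.rpow_one]
  have e3 : q ^ (r - 1 / 2) = q ^ (r - 3 / 2) * q := by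
    have h : (r - 1 / 2 : ℝ) = (r - 3 / 2) + 1 := by ring
    rw [h, Real.rpow_add hq, Real.rpow_one]
  have e4 : (r - 1 / 2 - 1 : ℝ) = r - 3 / 2 := by ring
  rw [e1, e2, e3, e4]
  field_simp
  ring
end

section
/- Let n ≥ 1, σ ∈ ℂ∖{0}, and χ₀ : ℝ → ℝ differentiable. Then on (0,∞)×ℝ×ℝ^{n−1} the b-Poisson bracket satisfies: { (Re σ/|σ|²)·x²(τ_b²+|μ_b|²) − 2xτ_b , χ₀(x²|μ_b|²) } = −4x·(1 − (Re σ/|σ|²)·xτ_b)·x²|μ_b|²·χ₀′(x²|μ_b|²). -/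
/-- The cutoff bracket computation for the rescaled conjugated operator with complex
`σ ≠ 0`: for differentiable `χ₀ : ℝ → ℝ`,
`{(Re σ/|σ|²)x²(τ_b²+|μ_b|²) − 2xτ_b, χ₀(x²|μ_b|²)}
   = −4x(1 − (Re σ/|σ|²)xτ_b)·x²|μ_b|²·χ₀′(x²|μ_b|²)` on `(0,∞) × ℝ × ℝ^{n-1}`. -/
theorem cutoff_bracket_complex (n : ℕ) (hn : 1 ≤ n) (σ : ℂ) (hσ : σ ≠ 0) (χ₀ : ℝ → ℝ)
    (hχ₀ : Differentiable ℝ χ₀)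
    (x τb : ℝ) (hx : 0 < x) (μb : EuclideanSpace ℝ (Fin (n - 1))) :
    bBracket
        (fun x τ μ => σ.re / ‖σ‖ ^ 2 * (x ^ 2 * (τ ^ 2 + ‖μ‖ ^ 2)) - 2 * x * τ)
        (fun x _τ μ => χ₀ (x ^ 2 * ‖μ‖ ^ 2))
        x τb μb
      = -4 * x * (1 - σ.re / ‖σ‖ ^ 2 * (x * τb)) * (x ^ 2 * ‖μb‖ ^ 2) *
          deriv χ₀ (x ^ 2 * ‖μb‖ ^ 2) := by
  set c := σ.re / ‖σ‖ ^ 2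
  have h1 : deriv (fun t => c * (x ^ 2 * (t ^ 2 + ‖μb‖ ^ 2)) - 2 * x * t) τb
      = c * (x ^ 2 * (2 * τb)) - 2 * x := by
    have : HasDerivAt (fun t : ℝ => c * (x ^ 2 * (t ^ 2 + ‖μb‖ ^ 2)) - 2 * x * t)
        (c * (x ^ 2 * (2 * τb)) - 2 * x) τb := by
      have h := (((hasDerivAt_pow 2 τb).add_const (‖μb‖ ^ 2)).const_mul (x ^ 2)).const_mul c
      have h2 := (hasDerivAt_id τb).const_mul (2 * x)
      simpa [mul_assoc, mul_comm, mul_left_comm, pow_one, Pi.sub_def] using h.sub h2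
    exact this.deriv
  have h2 : deriv (fun s => c * (s ^ 2 * (τb ^ 2 + ‖μb‖ ^ 2)) - 2 * s * τb) x
      = c * (2 * x * (τb ^ 2 + ‖μb‖ ^ 2)) - 2 * τb := by
    have : HasDerivAt (fun s : ℝ => c * (s ^ 2 * (τb ^ 2 + ‖μb‖ ^ 2)) - 2 * s * τb)
        (c * (2 * x * (τb ^ 2 + ‖μb‖ ^ 2)) - 2 * τb) x := by
      have h := (((hasDerivAt_pow 2 x)).mul_const (τb ^ 2 + ‖μb‖ ^ 2)).const_mul c
      have h2 : HasDerivAt (fun s : ℝ => 2 * s * τb) (2 * τb) x := by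
        simpa [mul_assoc, mul_comm, mul_left_comm] using
          ((hasDerivAt_id x).const_mul 2).mul_const τb
      simpa [mul_assoc, mul_comm, mul_left_comm, pow_one, Pi.sub_def] using h.sub h2
    exact this.deriv
  have h3 : deriv (fun s => χ₀ (s ^ 2 * ‖μb‖ ^ 2)) x
      = deriv χ₀ (x ^ 2 * ‖μb‖ ^ 2) * (2 * x * ‖μb‖ ^ 2) := by
    have hin : HasDerivAt (fun s : ℝ => s ^ 2 * ‖μb‖ ^ 2) (2 * x * ‖μb‖ ^ 2) x := by
      simpa [pow_one] using (hasDerivAt_pow 2 x).mul_const (‖μb‖ ^ 2)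
    exact ((hχ₀ _).hasDerivAt.comp x hin).deriv
  have h4 : deriv (fun _t : ℝ => χ₀ (x ^ 2 * ‖μb‖ ^ 2)) τb = 0 := deriv_const _ _
  simp only [bBracket, h1, h2, h3, h4]
  ring
end
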